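/- arXiv:1903.04883 — 5 statements merged into one kernel-verified Lean document; each statement's English description precedes it below -/
import Mathlib

section
/- For every integer p ≥ 1 and every even integer k with 0 ≤ k ≤ 2p, one has ∑_{j=−p}^{p} δ^k_{p,j} · j^{2p+1} = 0. -/
/-!
Reflecting the nodes `-p, …, p` through `0` gives `F_{p,-j}(x) = F_{p,j}(-x)`, so for even `k`
the weights `δ^k_{p,j}` are even in `j`. Multiplied by the odd function `j ↦ j^{2p+1}`, they
give an odd summand, whose sum over the symmetric range `-p, …, p` vanishes.
-/

/-- Lagrange basis polynomial `F_{p,j}` on nodes `-p, …, p`. -/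
noncomputable def Fpoly (p : ℕ) (j : ℤ) (x : ℝ) : ℝ :=
  ∏ r ∈ (Finset.Icc (-(p:ℤ)) (p:ℤ)).erase j, (x - (r:ℝ)) / ((j:ℝ) - (r:ℝ))

/-- `δ^k_{p,j} = F_{p,j}^{(k)}(0)`. -/
noncomputable def delta (p k : ℕ) (j : ℤ) : ℝ := iteratedDeriv k (Fpoly p j) 0

open Finset

lemma Finset.map_neg_Icc_neg {α : Type*} [AddCommGroup α] [LinearOrder α] [IsOrderedAddMonoid α]
    [LocallyFiniteOrder α] (a : α) : (Icc (-a) a).map (Equiv.neg α).toEmbedding = Icc (-a) a := by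
  ext x
  simp only [mem_map_equiv, Equiv.neg_symm, Equiv.neg_apply, mem_Icc]
  rw [neg_le_neg_iff, neg_le, and_comm]

lemma Fpoly_neg (p : ℕ) (j : ℤ) (x : ℝ) : Fpoly p (-j) x = Fpoly p j (-x) := by
  have hnodes : (Icc (-(p:ℤ)) p).erase (-j) =
      ((Icc (-(p:ℤ)) p).erase j).map (Equiv.neg ℤ).toEmbedding := by
    rw [map_erase, map_neg_Icc_neg]
    rfl
  rw [Fpoly, Fpoly, hnodes, prod_map]
  refine prod_congr rfl fun r _ => ?_
  simp only [Equiv.coe_toEmbedding, Equiv.neg_apply, Int.cast_neg]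
  rw [← neg_div_neg_eq]
  ring

lemma delta_even {k : ℕ} (hk : Even k) (p : ℕ) : (delta p k).Even := fun j => by
  rw [delta, delta, funext (Fpoly_neg p j), iteratedDeriv_comp_neg, hk.neg_one_pow, neg_zero,
    one_smul]

theorem delta_moment_odd_power_of_even_general (p : ℕ) (k : ℕ)
    (heven : Even k) :
    ∑ j ∈ Finset.Icc (-(p:ℤ)) (p:ℤ), delta p k j * (j:ℝ)^(2*p+1) = 0 := by
  have hodd : Function.Odd fun j : ℤ => (j : ℝ) ^ (2 * p + 1) := fun j => by
    push_cast
    exact Odd.neg_pow ⟨p, rfl⟩ _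
  exact ((delta_even heven p).mul_odd hodd).finsetSum_eq_zero (map_neg_Icc_neg (p : ℤ))

/-- For even k: ∑_{j=-p}^{p} δ^k_{p,j} j^{2p+1} = 0. -/
theorem delta_moment_odd_power_of_even (p : ℕ) (hp : 1 ≤ p) (k : ℕ)
    (heven : Even k) (hk : k ≤ 2*p) :
    ∑ j ∈ Finset.Icc (-(p:ℤ)) (p:ℤ), delta p k j * (j:ℝ)^(2*p+1) = 0 :=
  delta_moment_odd_power_of_even_general p k heven
end

section
/- For every integer p ≥ 2, every integer j with −(p−1) ≤ j ≤ p−1, and every integer k ≥ 0, the recurrence δ^k_{p,j} = (1/(p² − j²)) · ( p² · δ^k_{p−1,j} − k(k−1) · δ^{k−2}_{p−1,j} ) holds, with the convention that δ^{k−2}_{p−1,j} = 0 when k < 2. -/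
open Polynomial

noncomputable def Ppoly (p : ℕ) (j : ℤ) : ℝ[X] :=
  ∏ r ∈ (Finset.Icc (-(p:ℤ)) (p:ℤ)).erase j, (C (1/((j:ℝ) - (r:ℝ))) * (X - C (r:ℝ)))

lemma Fpoly_eq (p : ℕ) (j : ℤ) : Fpoly p j = fun x => (Ppoly p j).eval x := by
  ext x
  simp only [Fpoly, Ppoly, eval_prod, eval_mul, eval_C, eval_sub, eval_X]
  refine Finset.prod_congr rfl fun r _ => ?_
  ring

lemma iteratedDeriv_eval (P : ℝ[X]) (n : ℕ) :
    iteratedDeriv n (fun x => P.eval x) = fun x => (derivative^[n] P).eval x := by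
  induction n with
  | zero => simp
  | succ n ih =>
      rw [iteratedDeriv_succ, ih, Function.iterate_succ_apply']
      ext x
      exact Polynomial.deriv _

lemma delta_eq (p k : ℕ) (j : ℤ) :
    delta p k j = (Nat.factorial k : ℝ) * (Ppoly p j).coeff k := by
  rw [delta, Fpoly_eq, iteratedDeriv_eval]
  simp only
  rw [← Polynomial.coeff_zero_eq_eval_zero, Polynomial.coeff_iterate_derivative]
  simp [Nat.descFactorial_self, nsmul_eq_mul]

/-- Recurrence for the interior centered weights:
δ^k_{p,j} = (p² δ^k_{p-1,j} - k(k-1) δ^{k-2}_{p-1,j}) / (p² - j²),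
with the convention δ^{k-2}_{p-1,j} = 0 when k < 2. -/
theorem delta_recurrence_interior (p : ℕ) (hp : 2 ≤ p) (j : ℤ)
    (hj1 : -((p:ℤ)-1) ≤ j) (hj2 : j ≤ (p:ℤ)-1) (k : ℕ) :
    delta p k j = (1/((p:ℝ)^2 - (j:ℝ)^2)) *
      ((p:ℝ)^2 * delta (p-1) k j
        - (k:ℝ)*((k:ℝ)-1) * (if k < 2 then 0 else delta (p-1) (k-2) j)) := by
  have hp1 : ((p - 1 : ℕ) : ℤ) = (p : ℤ) - 1 := by
    have : 1 ≤ p := by omega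
    push_cast [this]; ring
  have hset : (Finset.Icc (-(p:ℤ)) (p:ℤ)).erase j =
      insert (-(p:ℤ)) (insert ((p:ℤ))
        ((Finset.Icc (-((p:ℤ)-1)) ((p:ℤ)-1)).erase j)) := by
    ext r
    simp only [Finset.mem_erase, Finset.mem_Icc, Finset.mem_insert]
    omega
  have hmem1 : (-(p:ℤ)) ∉ insert ((p:ℤ))
      ((Finset.Icc (-((p:ℤ)-1)) ((p:ℤ)-1)).erase j) := by
    simp only [Finset.mem_insert, Finset.mem_erase, Finset.mem_Icc]
    omega
  have hQ : Ppoly p j =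
      (C (1/((j:ℝ) - ((-(p:ℤ) : ℤ) : ℝ))) * (X - C ((-(p:ℤ) : ℤ) : ℝ))) *
      ((C (1/((j:ℝ) - (((p:ℤ) : ℤ) : ℝ))) * (X - C (((p:ℤ) : ℤ) : ℝ))) * Ppoly (p-1) j) := by
    have hmem2 : ((p:ℤ)) ∉ (Finset.Icc (-((p:ℤ)-1)) ((p:ℤ)-1)).erase j := by
      simp only [Finset.mem_erase, Finset.mem_Icc]; omega
    rw [Ppoly, hset, Finset.prod_insert hmem1, Finset.prod_insert hmem2, Ppoly, hp1]
  push_cast at hQ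
  have hjsq : (j:ℝ)^2 < (p:ℝ)^2 := by
    have : j^2 < (p:ℤ)^2 := by nlinarith
    exact_mod_cast this
  have hd : ((p:ℝ)^2 - (j:ℝ)^2) ≠ 0 := by linarith
  have hne1 : (j:ℝ) - (-(p:ℝ)) ≠ 0 := by
    intro h; nlinarith
  have hne2 : (j:ℝ) - (p:ℝ) ≠ 0 := by
    intro h; nlinarith
  set a : ℝ := 1/((p:ℝ)^2 - (j:ℝ)^2) with ha
  have key : C (1/((j:ℝ) - (-(p:ℝ)))) * C (1/((j:ℝ) - (p:ℝ))) = C (-a) := by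
    rw [← C_mul]
    congr 1
    have hd' : (-(p:ℝ)^2 + (j:ℝ)^2) ≠ 0 := fun h => hd (by linarith)
    rw [ha]
    field_simp [hd']
    ring
  set Q := Ppoly (p-1) j with hQdef
  have hfac : Ppoly p j = C a * (C ((p:ℝ)^2) * Q - Q * X^2) := by
    calc Ppoly p j
        = (C (1/((j:ℝ) - (-(p:ℝ)))) * C (1/((j:ℝ) - (p:ℝ)))) *
            ((X - C (-(p:ℝ))) * (X - C (p:ℝ)) * Q) := by rw [hQ]; ring
      _ = C (-a) * ((X - C (-(p:ℝ))) * (X - C (p:ℝ)) * Q) := by rw [key]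
      _ = C a * (C ((p:ℝ)^2) * Q - Q * X^2) := by
          simp only [map_neg, C_pow]; ring
  have hcoeff : ∀ m : ℕ, (Ppoly p j).coeff m =
      a * ((p:ℝ)^2 * Q.coeff m - (if 2 ≤ m then Q.coeff (m - 2) else 0)) := by
    intro m
    rw [hfac, coeff_C_mul, coeff_sub, coeff_C_mul, coeff_mul_X_pow', mul_sub]
  rw [delta_eq, delta_eq, hcoeff]
  rcases lt_or_ge k 2 with hk | hk
  · have h2 : ¬ (2 ≤ k) := by omega
    simp only [if_pos hk, if_neg h2]
    ring
  · have h2 : ¬ (k < 2) := by omega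
    simp only [if_pos hk, if_neg h2]
    rw [delta_eq]
    obtain ⟨m, rfl⟩ : ∃ m, k = m + 2 := ⟨k - 2, by omega⟩
    simp only [Nat.add_sub_cancel]
    rw [show m + 2 = (m + 1) + 1 from rfl, Nat.factorial_succ, Nat.factorial_succ]
    push_cast
    ring
end

section
/- Let p ≥ 1 and m ≥ 1 be integers, a ∈ ℝ, λ > 0, and let g : ℝ → ℝ be of class C^∞. Define u(x,t) = g(x − a·t), which solves the linear transport equation u_t + a·u_x = 0. Fix x ∈ ℝ and t ∈ ℝ, and for Δx > 0 set Δt = λ·Δx and c = a·Δt/Δx = a·λ. Then as Δx → 0⁺, the local discretization error of the high-order Lax–Wendroff scheme satisfies u(x, t+Δt) − u(x, t) − ∑_{k=1}^{m} ((−1)^k c^k / k!) ∑_{j=−p}^{p} δ^k_{p,j} · u(x + j·Δx, t) = O(Δx^{min(m,2p)+1}); i.e., the error is of order O(Δt^{m+1} + Δx^{2p+1}). -/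
open Asymptotics Filter Topology

namespace LWaux

lemma iteratedDeriv_polyeval (k : ℕ) (P : Polynomial ℝ) :
    iteratedDeriv k (fun x => P.eval x) = fun x => (Polynomial.derivative^[k] P).eval x := by
  induction k generalizing P with
  | zero => simp
  | succ k ih =>
    rw [iteratedDeriv_succ', Function.iterate_succ_apply]
    rw [← ih P.derivative]
    have hd : deriv (fun x : ℝ => P.eval x) = fun x => P.derivative.eval x :=
      funext fun y => P.deriv
    rw [hd]

lemma Fpoly_eq (p : ℕ) (j : ℤ) :
    Fpoly p j = fun x =>
      (Lagrange.basis (Finset.Icc (-(p:ℤ)) (p:ℤ)) (fun r : ℤ => (r:ℝ)) j).eval x := by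
  funext x
  unfold Fpoly Lagrange.basis
  rw [Polynomial.eval_prod]
  refine Finset.prod_congr rfl fun r _ => ?_
  unfold Lagrange.basisDivisor
  simp only [Polynomial.eval_mul, Polynomial.eval_C, Polynomial.eval_sub, Polynomial.eval_X]
  rw [div_eq_inv_mul]

lemma sum_delta_pow (p k n : ℕ) (hn : n ≤ 2*p) :
    ∑ j ∈ Finset.Icc (-(p:ℤ)) (p:ℤ), delta p k j * (j:ℝ)^n
      = if n = k then (Nat.factorial n : ℝ) else 0 := by
  set S := Finset.Icc (-(p:ℤ)) (p:ℤ) with hS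
  have hinj : Set.InjOn (fun r : ℤ => (r:ℝ)) S := by
    intro a _ b _ hab
    simpa using hab
  have hcard : S.card = 2*p + 1 := by
    rw [hS, Int.card_Icc]
    omega
  have hdeg : ((Polynomial.X : Polynomial ℝ)^n).degree < (S.card : ℕ) := by
    rw [Polynomial.degree_X_pow, hcard]
    exact_mod_cast Nat.lt_succ_of_le hn
  have hinterp : (Polynomial.X : Polynomial ℝ)^n
      = Lagrange.interpolate S (fun r : ℤ => (r:ℝ)) (fun j : ℤ => (j:ℝ)^n) := by
    have h1 := Lagrange.eq_interpolate hinj hdeg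
    simpa using h1
  have hdelta : ∀ j : ℤ, delta p k j
      = (Polynomial.derivative^[k] (Lagrange.basis S (fun r : ℤ => (r:ℝ)) j)).eval 0 := by
    intro j
    rw [delta, Fpoly_eq, iteratedDeriv_polyeval]
  calc ∑ j ∈ S, delta p k j * (j:ℝ)^n
      = (Polynomial.derivative^[k]
          (Lagrange.interpolate S (fun r : ℤ => (r:ℝ)) (fun j : ℤ => (j:ℝ)^n))).eval 0 := by
        rw [Lagrange.interpolate_apply, Polynomial.iterate_derivative_sum,
          Polynomial.eval_finset_sum]
        refine Finset.sum_congr rfl fun j _ => ?_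
        rw [hdelta j, Polynomial.iterate_derivative_C_mul, Polynomial.eval_mul,
          Polynomial.eval_C]
        ring
    _ = (Polynomial.derivative^[k] ((Polynomial.X : Polynomial ℝ)^n)).eval 0 := by
        rw [hinterp]
    _ = (n.descFactorial k : ℝ) * (0:ℝ)^(n-k) := by
        rw [Polynomial.iterate_derivative_X_pow_eq_C_mul, Polynomial.eval_mul,
          Polynomial.eval_C, Polynomial.eval_pow, Polynomial.eval_X]
    _ = if n = k then (Nat.factorial n : ℝ) else 0 := by
        rcases lt_trichotomy n k with h | h | h
        · rw [Nat.descFactorial_eq_zero_iff_lt.mpr h]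
          simp [Nat.ne_of_lt h]
        · subst h
          simp [Nat.descFactorial_self]
        · rw [if_neg (Nat.ne_of_gt h), zero_pow (by omega), mul_zero]

lemma taylor_isBigO (n : ℕ) (f : ℝ → ℝ) (hf : ContDiff ℝ (⊤:ℕ∞) f) :
    (fun s : ℝ => f s - ∑ i ∈ Finset.range (n+1),
        iteratedDeriv i f 0 * s^i / (Nat.factorial i : ℝ))
      =O[𝓝 (0:ℝ)] (fun s => s^(n+1)) := by
  induction n generalizing f with
  | zero =>
    have h0 := ((hf.differentiable (by simp)) 0).isBigO_sub (x₀ := (0:ℝ))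
    exact h0.congr (fun s => by simp) (fun s => by simp)
  | succ n ih =>
    have hf' : ContDiff ℝ (⊤:ℕ∞) (deriv f) := (contDiff_infty_iff_deriv.mp hf).2
    set F : ℝ → ℝ := fun s => f s - ∑ i ∈ Finset.range (n+2),
        iteratedDeriv i f 0 * s^i / (Nat.factorial i : ℝ) with hF
    set F' : ℝ → ℝ := fun s => deriv f s - ∑ i ∈ Finset.range (n+1),
        iteratedDeriv i (deriv f) 0 * s^i / (Nat.factorial i : ℝ) with hF'
    have hder : ∀ s : ℝ, HasDerivAt F (F' s) s := by
      intro s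
      have h1 : HasDerivAt f (deriv f s) s := ((hf.differentiable (by simp)) s).hasDerivAt
      have h2 : ∀ i ∈ Finset.range (n+2),
          HasDerivAt (fun y : ℝ => iteratedDeriv i f 0 * y^i / (Nat.factorial i : ℝ))
            (iteratedDeriv i f 0 * ((i:ℝ) * s^(i-1)) / (Nat.factorial i : ℝ)) s := by
        intro i _
        have h3 := (hasDerivAt_pow i s).const_mul
          (iteratedDeriv i f 0 / (Nat.factorial i : ℝ))
        have h4 : (fun y : ℝ => iteratedDeriv i f 0 / (Nat.factorial i : ℝ) * y ^ i)
            = fun y : ℝ => iteratedDeriv i f 0 * y ^ i / (Nat.factorial i : ℝ) := by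
          funext y; ring
        have h5 : iteratedDeriv i f 0 / (Nat.factorial i : ℝ) * ((i:ℝ) * s ^ (i-1))
            = iteratedDeriv i f 0 * ((i:ℝ) * s^(i-1)) / (Nat.factorial i : ℝ) := by ring
        rw [h4, h5] at h3
        exact h3
      have hsum := HasDerivAt.fun_sum h2
      have heq : ∑ i ∈ Finset.range (n+2),
          iteratedDeriv i f 0 * ((i:ℝ) * s^(i-1)) / (Nat.factorial i : ℝ)
          = ∑ i ∈ Finset.range (n+1),
              iteratedDeriv i (deriv f) 0 * s^i / (Nat.factorial i : ℝ) := by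
        rw [Finset.sum_range_succ']
        simp only [Nat.cast_zero, zero_mul, mul_zero, zero_div, add_zero]
        refine Finset.sum_congr rfl fun i _ => ?_
        rw [← iteratedDeriv_succ']
        have hfac : (Nat.factorial (i+1) : ℝ) = ((i:ℝ)+1) * (Nat.factorial i : ℝ) := by
          rw [Nat.factorial_succ]; push_cast; ring
        rw [hfac]
        have hne : ((i:ℝ)+1) ≠ 0 := by positivity
        have hfne : (Nat.factorial i : ℝ) ≠ 0 := by
          exact_mod_cast (Nat.factorial_pos i).ne'
        field_simp
        ring_nf; rw [show 1 + i - 1 = i by omega]; push_cast; ring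
      rw [hF']
      exact h1.sub (heq ▸ hsum)
    -- bound F' near 0 using ih
    obtain ⟨C, hC⟩ := (isBigO_iff.mp (ih (deriv f) hf'))
    rw [Metric.eventually_nhds_iff] at hC
    obtain ⟨ε, hε, hball⟩ := hC
    rw [isBigO_iff]
    refine ⟨max C 0, ?_⟩
    rw [Metric.eventually_nhds_iff]
    refine ⟨ε, hε, fun y hy => ?_⟩
    have hy' : |y| < ε := by rwa [Real.dist_eq, sub_zero] at hy
    have hF0 : F 0 = 0 := by
      simp [hF, Finset.sum_range_succ']
    have habs : ∀ z ∈ Set.uIcc (0:ℝ) y, |z| ≤ |y| := by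
      intro z hz
      rcases Set.mem_uIcc.mp hz with ⟨h1, h2⟩ | ⟨h1, h2⟩
      · rw [abs_of_nonneg h1]; exact h2.trans (le_abs_self y)
      · rw [abs_of_nonpos h2]; exact le_trans (by linarith) (neg_le_abs y)
    have hbound : ∀ z ∈ Set.uIcc (0:ℝ) y, ‖F' z‖ ≤ max C 0 * |y|^(n+1) := by
      intro z hz
      have h1 : ‖F' z‖ ≤ C * ‖z^(n+1)‖ := by
        refine hball ?_
        rw [Real.dist_eq, sub_zero]
        exact lt_of_le_of_lt (habs z hz) hy'
      calc ‖F' z‖ ≤ C * ‖z^(n+1)‖ := h1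
        _ ≤ max C 0 * |z|^(n+1) := by
            rw [Real.norm_eq_abs, abs_pow]
            exact mul_le_mul_of_nonneg_right (le_max_left C 0)
              (pow_nonneg (abs_nonneg z) _)
        _ ≤ max C 0 * |y|^(n+1) := by
            exact mul_le_mul_of_nonneg_left
              (pow_le_pow_left₀ (abs_nonneg z) (habs z hz) _) (le_max_right C 0)
    have hMVT := Convex.norm_image_sub_le_of_norm_hasDerivWithin_le
      (f := F) (f' := F') (s := Set.uIcc (0:ℝ) y)
      (fun z _ => (hder z).hasDerivWithinAt) hbound (convex_uIcc 0 y)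
      Set.left_mem_uIcc Set.right_mem_uIcc
    calc ‖F y‖ = ‖F y - F 0‖ := by rw [hF0, sub_zero]
      _ ≤ max C 0 * |y|^(n+1) * ‖y - 0‖ := hMVT
      _ = max C 0 * ‖y^(n+1+1)‖ := by
          rw [sub_zero, Real.norm_eq_abs, Real.norm_eq_abs, abs_pow, pow_succ]
          ring

end LWaux

/-- Local discretization error of the high-order Lax–Wendroff scheme applied to
the smooth solution u(x,t) = g(x - a t) of the transport equation u_t + a u_x = 0:
with Δt = λ Δx and c = a λ,
u(x,t+Δt) - u(x,t) - ∑_{k=1}^{m} ((-1)^k c^k/k!) ∑_{j=-p}^{p} δ^k_{p,j} u(x+jΔx,t)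
= O(Δx^{min(m,2p)+1}) as Δx → 0⁺, i.e. the error is O(Δt^{m+1} + Δx^{2p+1}). -/
theorem LaxWendroff_local_error (p m : ℕ) (hp : 1 ≤ p) (hm : 1 ≤ m)
    (a lam : ℝ) (hlam : 0 < lam) (g : ℝ → ℝ) (hg : ContDiff ℝ (⊤ : ℕ∞) g)
    (u : ℝ → ℝ → ℝ) (hu : ∀ y s, u y s = g (y - a*s))
    (x t : ℝ) (c : ℝ) (hc : c = a * lam) :
    (fun Δx : ℝ =>
        u x (t + lam*Δx) - u x t
          - ∑ k ∈ Finset.Icc 1 m, ((-1:ℝ)^k * c^k / (Nat.factorial k : ℝ)) *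
              ∑ j ∈ Finset.Icc (-(p:ℤ)) (p:ℤ), delta p k j * u (x + (j:ℝ)*Δx) t)
      =O[𝓝[>] (0:ℝ)] (fun Δx : ℝ => Δx^(min m (2*p) + 1)) := by
  set S : Finset ℤ := Finset.Icc (-(p:ℤ)) (p:ℤ) with hSdef
  set Q : ℕ := min m (2*p) with hQ
  set A : ℕ → ℝ := fun k => (-1:ℝ)^k * c^k / (Nat.factorial k : ℝ) with hA
  set h : ℝ → ℝ := fun s => g ((x - a*t) + s) with hhdef
  have hh : ContDiff ℝ (⊤:ℕ∞) h := hg.comp (contDiff_const.add contDiff_id)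
  set T : ℝ → ℝ := fun s => ∑ n ∈ Finset.range (Q+1),
      iteratedDeriv n h 0 * s^n / (Nat.factorial n : ℝ) with hTdef
  -- Taylor remainders are O(Δx^(Q+1))
  have hR : ∀ b : ℝ, (fun Δx : ℝ => h (b*Δx) - T (b*Δx)) =O[𝓝[>] (0:ℝ)]
      (fun Δx => Δx^(Q+1)) := by
    intro b
    have h1 := LWaux.taylor_isBigO Q h hh
    have h2 : Tendsto (fun Δx : ℝ => b*Δx) (𝓝[>] (0:ℝ)) (𝓝 (0:ℝ)) := by
      have h3 : Tendsto (fun Δx : ℝ => b*Δx) (𝓝 (0:ℝ)) (𝓝 (b*0)) :=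
        (continuous_const.mul continuous_id).tendsto 0
      rw [mul_zero] at h3
      exact h3.mono_left nhdsWithin_le_nhds
    have h3 := h1.comp_tendsto h2
    have h4 : (fun Δx : ℝ => (b*Δx)^(Q+1)) =O[𝓝[>] (0:ℝ)] fun Δx : ℝ => Δx^(Q+1) := by
      have h5 := (isBigO_refl (fun Δx : ℝ => Δx^(Q+1)) (𝓝[>] (0:ℝ))).const_mul_left (b^(Q+1))
      exact h5.congr (fun Δx => by rw [mul_pow]) (fun _ => rfl)
    exact (h3.congr (fun Δx => rfl) (fun _ => rfl)).trans h4
  -- key algebraic cancellation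
  have hkey : ∀ Δx : ℝ,
      ∑ k ∈ Finset.Icc 1 m, A k * ∑ j ∈ S, delta p k j * T ((j:ℝ)*Δx)
        = T ((-c)*Δx) - h 0 := by
    intro Δx
    have hinner : ∀ k ∈ Finset.Icc 1 m, ∑ j ∈ S, delta p k j * T ((j:ℝ)*Δx)
        = if k ≤ Q then iteratedDeriv k h 0 * Δx^k else 0 := by
      intro k _
      calc ∑ j ∈ S, delta p k j * T ((j:ℝ)*Δx)
          = ∑ j ∈ S, ∑ n ∈ Finset.range (Q+1),
              delta p k j * (j:ℝ)^n * (iteratedDeriv n h 0 * Δx^n / (Nat.factorial n : ℝ)) := by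
            refine Finset.sum_congr rfl fun j _ => ?_
            simp only [hTdef]
            rw [Finset.mul_sum]
            refine Finset.sum_congr rfl fun n _ => ?_
            rw [mul_pow]; ring
        _ = ∑ n ∈ Finset.range (Q+1), (∑ j ∈ S, delta p k j * (j:ℝ)^n) *
              (iteratedDeriv n h 0 * Δx^n / (Nat.factorial n : ℝ)) := by
            rw [Finset.sum_comm]
            exact Finset.sum_congr rfl fun n _ => (Finset.sum_mul _ _ _).symm
        _ = ∑ n ∈ Finset.range (Q+1), (if n = k then (Nat.factorial n : ℝ) else 0) *
              (iteratedDeriv n h 0 * Δx^n / (Nat.factorial n : ℝ)) := by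
            refine Finset.sum_congr rfl fun n hn => ?_
            have hn2p : n ≤ 2*p := by
              have := Finset.mem_range.mp hn
              omega
            rw [LWaux.sum_delta_pow p k n hn2p]
        _ = if k ≤ Q then iteratedDeriv k h 0 * Δx^k else 0 := by
            simp only [ite_mul, zero_mul, Finset.sum_ite_eq', Finset.mem_range,
              Nat.lt_succ_iff]
            split_ifs with hkQ
            · have hfne : (Nat.factorial k : ℝ) ≠ 0 := by
                exact_mod_cast (Nat.factorial_pos k).ne'
              field_simp
            · rfl
    calc ∑ k ∈ Finset.Icc 1 m, A k * ∑ j ∈ S, delta p k j * T ((j:ℝ)*Δx)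
        = ∑ k ∈ Finset.Icc 1 m,
            (if k ≤ Q then A k * (iteratedDeriv k h 0 * Δx^k) else 0) := by
          refine Finset.sum_congr rfl fun k hk => ?_
          rw [hinner k hk, mul_ite, mul_zero]
      _ = ∑ k ∈ (Finset.Icc 1 m).filter (· ≤ Q), A k * (iteratedDeriv k h 0 * Δx^k) := by
          rw [Finset.sum_filter]
      _ = ∑ k ∈ Finset.Icc 1 Q, A k * (iteratedDeriv k h 0 * Δx^k) := by
          congr 1
          ext k
          simp only [Finset.mem_filter, Finset.mem_Icc, hQ]
          omega
      _ = T ((-c)*Δx) - h 0 := by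
          have hsplit : Finset.range (Q+1) = insert 0 (Finset.Icc 1 Q) := by
            ext r
            simp only [Finset.mem_range, Finset.mem_insert, Finset.mem_Icc]
            omega
          simp only [hTdef]
          rw [hsplit, Finset.sum_insert (by simp)]
          simp only [iteratedDeriv_zero, pow_zero, Nat.factorial_zero, Nat.cast_one,
            mul_one, div_one]
          have hterm : ∀ k ∈ Finset.Icc 1 Q, A k * (iteratedDeriv k h 0 * Δx^k)
              = iteratedDeriv k h 0 * ((-c)*Δx)^k / (Nat.factorial k : ℝ) := by
            intro k _
            have : ((-c)*Δx)^k = (-1:ℝ)^k * c^k * Δx^k := by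
              rw [show ((-c)*Δx) = -(c*Δx) by ring, neg_pow, mul_pow]
              ring
            rw [this, hA]
            ring
          rw [Finset.sum_congr rfl hterm]
          ring
  -- rewrite the error in terms of Taylor remainders
  have hcast : ∀ Δx : ℝ,
      u x (t + lam*Δx) - u x t - ∑ k ∈ Finset.Icc 1 m, A k *
          ∑ j ∈ S, delta p k j * u (x + (j:ℝ)*Δx) t
        = (h ((-c)*Δx) - T ((-c)*Δx))
          - ∑ k ∈ Finset.Icc 1 m, A k *
              ∑ j ∈ S, delta p k j * (h ((j:ℝ)*Δx) - T ((j:ℝ)*Δx)) := by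
    intro Δx
    have h1 : u x (t + lam*Δx) = h ((-c)*Δx) := by
      rw [hu]
      simp only [hhdef]
      congr 1
      rw [hc]; ring
    have h2 : u x t = h 0 := by
      rw [hu]
      simp only [hhdef]
      congr 1
      ring
    have h3 : ∀ j : ℤ, u (x + (j:ℝ)*Δx) t = h ((j:ℝ)*Δx) := by
      intro j
      rw [hu]
      simp only [hhdef]
      congr 1
      ring
    have h5 : ∑ k ∈ Finset.Icc 1 m, A k *
        ∑ j ∈ S, delta p k j * (h ((j:ℝ)*Δx) - T ((j:ℝ)*Δx))
        = (∑ k ∈ Finset.Icc 1 m, A k * ∑ j ∈ S, delta p k j * h ((j:ℝ)*Δx))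
          - ∑ k ∈ Finset.Icc 1 m, A k * ∑ j ∈ S, delta p k j * T ((j:ℝ)*Δx) := by
      rw [← Finset.sum_sub_distrib]
      refine Finset.sum_congr rfl fun k _ => ?_
      rw [← mul_sub, ← Finset.sum_sub_distrib]
      congr 1
      exact Finset.sum_congr rfl fun j _ => mul_sub _ _ _
    rw [h1, h2]
    simp only [h3]
    rw [h5, hkey Δx]
    ring
  -- conclude
  have hbig : (fun Δx : ℝ => (h ((-c)*Δx) - T ((-c)*Δx))
      - ∑ k ∈ Finset.Icc 1 m, A k *
          ∑ j ∈ S, delta p k j * (h ((j:ℝ)*Δx) - T ((j:ℝ)*Δx)))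
      =O[𝓝[>] (0:ℝ)] (fun Δx => Δx^(Q+1)) := by
    refine (hR (-c)).sub (IsBigO.fun_sum fun k _ => ?_)
    refine IsBigO.const_mul_left ?_ (A k)
    exact IsBigO.fun_sum fun (j : ℤ) _ => (hR ((j:ℝ))).const_mul_left (delta p k j)
  exact hbig.congr (fun Δx => (hcast Δx).symm) (fun _ => rfl)
end

section
/- Let p ≥ 1 be an integer and define h₂(c) = ∑_{j=−p}^{p} F_{p,j}(c) · j^{2p+2} − c^{2p+2}. Then for every c in the interval [0,1]: h₂(c) ≤ 0 if p is even, and h₂(c) ≥ 0 if p is odd; equivalently, (−1)^p · h₂(c) ≤ 0 for all c ∈ [0,1]. (This is the sign condition ensuring linear L²-stability of the order-2p Lax–Wendroff method under the CFL-1 condition.) -/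
/-!
Let `ω(x) = ∏_{r=-p}^{p} (x - r)` be the nodal polynomial. Since the nodes are symmetric, `ω` is
monic of degree `2p+1` with vanishing subleading coefficient, so `x^(2p+2) - x ω(x)` has degree at
most `2p`. It agrees with `x^(2p+2)` at the nodes, hence is reproduced exactly by interpolation, and
`h₂(c) = -c ω(c)`. For `c ∈ [0,1]` exactly the `p` factors `c - r` with `1 ≤ r ≤ p` are negative.
-/

open Polynomial Finset Lagrange

theorem Polynomial.Monic.natDegree_X_pow_sub_le_of_nextCoeff_eq_zero {R : Type*} [Ring R]
    {f : R[X]} (hf : f.Monic) (h : f.nextCoeff = 0) :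
    (X ^ f.natDegree - f).natDegree ≤ f.natDegree - 2 := by
  rw [← neg_sub, natDegree_neg, ← one_mul (X ^ f.natDegree), ← C_1, ← hf.leadingCoeff,
    self_sub_C_mul_X_pow]
  exact natDegree_eraseLead_le_of_nextCoeff_eq_zero h

theorem Lagrange.sum_eval_basis_mul_eq_sub {F ι : Type*} [Field F] [DecidableEq ι]
    {s : Finset ι} {v : ι → F} (hvs : Set.InjOn v s) {f g : F[X]}
    (hg : ∀ i ∈ s, g.eval (v i) = 0) (hfg : (f - g).degree < #s) (x : F) :
    ∑ i ∈ s, (Lagrange.basis s v i).eval x * f.eval (v i) = f.eval x - g.eval x := by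
  have := congrArg (eval x) (eq_interpolate hvs hfg)
  rw [interpolate_apply, eval_finsetSum, eval_sub] at this
  rw [this]
  refine sum_congr rfl fun i hi => ?_
  rw [eval_mul, eval_C, eval_sub, hg i hi, sub_zero, mul_comm]

theorem Int.sum_cast_Icc_neg_eq_zero {M : Type*} [AddCommGroupWithOne M] (n : ℤ) :
    ∑ r ∈ Icc (-n) n, (r : M) = 0 :=
  sum_involution (fun r _ => -r) (fun r _ => by push_cast; exact add_neg_cancel _)
    (fun r _ hr h => hr (by rw [show r = 0 by omega, Int.cast_zero]))
    (fun r hr => by simp only [mem_Icc] at hr ⊢; omega) (fun r _ => neg_neg r)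

theorem Fpoly_eq_eval_basis (p : ℕ) (j : ℤ) (x : ℝ) :
    Fpoly p j x = (Lagrange.basis (Icc (-(p:ℤ)) p) (fun r : ℤ => (r : ℝ)) j).eval x := by
  rw [Fpoly, Lagrange.basis, eval_prod]
  refine prod_congr rfl fun r _ => ?_
  simp [basisDivisor, div_eq_inv_mul]

theorem nextCoeff_nodal_Icc_neg (p : ℕ) :
    (nodal (Icc (-(p:ℤ)) p) (fun r : ℤ => (r : ℝ))).nextCoeff = 0 := by
  rw [nodal, prod_X_sub_C_nextCoeff, Int.sum_cast_Icc_neg_eq_zero, neg_zero]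

theorem sum_Fpoly_mul_pow_eq (p : ℕ) (c : ℝ) :
    ∑ j ∈ Icc (-(p:ℤ)) p, Fpoly p j c * (j : ℝ) ^ (2 * p + 2)
      = c ^ (2 * p + 2) - c * (nodal (Icc (-(p:ℤ)) p) (fun r : ℤ => (r : ℝ))).eval c := by
  set ω := nodal (Icc (-(p:ℤ)) p) (fun r : ℤ => (r : ℝ))
  have hcard : #(Icc (-(p:ℤ)) p) = 2 * p + 1 := by rw [Int.card_Icc]; omega
  have hmonic : (X * ω).Monic := monic_X.mul nodal_monic
  have hdeg : (X * ω).natDegree = 2 * p + 2 := by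
    rw [natDegree_mul X_ne_zero nodal_monic.ne_zero, natDegree_X, natDegree_nodal, hcard]; ring
  have hnext : (X * ω).nextCoeff = 0 := by
    rw [monic_X.nextCoeff_mul nodal_monic, nextCoeff_nodal_Icc_neg, add_zero]
    simpa using nextCoeff_X_add_C (0:ℝ)
  have hlt : (X ^ (2 * p + 2) - X * ω).degree < ((2 * p + 1 : ℕ) : WithBot ℕ) := by
    have := hmonic.natDegree_X_pow_sub_le_of_nextCoeff_eq_zero hnext
    rw [hdeg] at this
    exact (degree_le_of_natDegree_le this).trans_lt (by exact_mod_cast (by omega))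
  have := sum_eval_basis_mul_eq_sub (fun a _ b _ h => Int.cast_injective h)
    (fun i hi => by rw [eval_mul, eval_nodal_at_node hi, mul_zero]) (hcard ▸ hlt) c
  simp only [eval_pow, eval_X, eval_mul] at this
  rw [← this]
  exact sum_congr rfl fun j _ => by rw [Fpoly_eq_eval_basis]

theorem neg_one_pow_mul_prod_Icc_sub_nonneg (p : ℕ) {c : ℝ} (hc : c ∈ Set.Icc (0:ℝ) 1) :
    0 ≤ (-1) ^ p * ∏ r ∈ Icc (-(p:ℤ)) p, (c - r) := by
  have hsplit : Icc (-(p:ℤ)) p = Icc (-(p:ℤ)) 0 ∪ Icc 1 p := by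
    ext; simp only [mem_union, mem_Icc]; omega
  have hdisj : Disjoint (Icc (-(p:ℤ)) 0) (Icc 1 p) :=
    disjoint_left.2 fun r h₁ h₂ => by simp only [mem_Icc] at h₁ h₂; omega
  have hflip : ∏ r ∈ Icc (1:ℤ) p, (c - r) = (-1) ^ p * ∏ r ∈ Icc (1:ℤ) p, ((r:ℝ) - c) := by
    have hcard : #(Icc (1:ℤ) p) = p := by simp
    simpa only [neg_sub, hcard] using prod_neg (s := Icc (1:ℤ) p) fun r ↦ (r:ℝ) - c
  rw [hsplit, prod_union hdisj, hflip]
  calc (0:ℝ) ≤ (∏ r ∈ Icc (-(p:ℤ)) 0, (c - r)) * ∏ r ∈ Icc (1:ℤ) p, ((r:ℝ) - c) := by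
        refine mul_nonneg (prod_nonneg fun r hr => ?_) (prod_nonneg fun r hr => ?_)
        · have : (r:ℝ) ≤ 0 := by exact_mod_cast (mem_Icc.1 hr).2
          linarith [hc.1]
        · have : (1:ℝ) ≤ r := by exact_mod_cast (mem_Icc.1 hr).1
          linarith [hc.2]
    _ = (-1) ^ (2 * p) * ((∏ r ∈ Icc (-(p:ℤ)) 0, (c - r)) * ∏ r ∈ Icc (1:ℤ) p, ((r:ℝ) - c)) := by
        rw [(even_two_mul p).neg_one_pow, one_mul]
    _ = _ := by ring

theorem h2_sign_condition_general (p : ℕ) (h₂ : ℝ → ℝ)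
    (hh : ∀ c : ℝ, h₂ c =
      (∑ j ∈ Finset.Icc (-(p:ℤ)) (p:ℤ), Fpoly p j c * (j:ℝ)^(2*p+2)) - c^(2*p+2)) :
    ∀ c ∈ Set.Icc (0:ℝ) 1,
      (Even p → h₂ c ≤ 0) ∧ (Odd p → 0 ≤ h₂ c) ∧ (-1:ℝ)^p * h₂ c ≤ 0 := by
  intro c hc
  have hform : (-1:ℝ) ^ p * h₂ c = -(c * ((-1) ^ p * ∏ r ∈ Icc (-(p:ℤ)) p, (c - r))) := by
    rw [hh, sum_Fpoly_mul_pow_eq, eval_nodal]; ring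
  have hneg : (-1:ℝ) ^ p * h₂ c ≤ 0 :=
    hform ▸ neg_nonpos.2 (mul_nonneg hc.1 (neg_one_pow_mul_prod_Icc_sub_nonneg p hc))
  exact ⟨fun he => by simpa [he.neg_one_pow] using hneg,
    fun ho => by simpa [ho.neg_one_pow] using hneg, hneg⟩

/-- Sign condition ensuring linear L²-stability of the order-2p Lax–Wendroff
method under the CFL-1 condition: with
h₂(c) = ∑_{j=-p}^{p} F_{p,j}(c) j^{2p+2} - c^{2p+2}, for every c ∈ [0,1] one has
h₂(c) ≤ 0 if p is even, h₂(c) ≥ 0 if p is odd; equivalently (-1)^p h₂(c) ≤ 0. -/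
theorem h2_sign_condition (p : ℕ) (hp : 1 ≤ p) (h₂ : ℝ → ℝ)
    (hh : ∀ c : ℝ, h₂ c =
      (∑ j ∈ Finset.Icc (-(p:ℤ)) (p:ℤ), Fpoly p j c * (j:ℝ)^(2*p+2)) - c^(2*p+2)) :
    ∀ c ∈ Set.Icc (0:ℝ) 1,
      (Even p → h₂ c ≤ 0) ∧ (Odd p → 0 ≤ h₂ c) ∧ (-1:ℝ)^p * h₂ c ≤ 0 :=
  h2_sign_condition_general p h₂ hh
end

section
/- Let p ≥ 1 be an integer, a ∈ ℝ, Δx > 0, Δt > 0, and let (u_i)_{i∈ℤ} be a sequence of real numbers. Consider the Compact Approximate Taylor (CAT) recursion with linear flux f(v) = a·v: set f̃^{(0)}_{i,j} = a·u_{i+j} for j = −p+1, …, p; and for k = 1, …, 2p define ũ^{(k)}_{i,j} = −(1/Δx) ∑_{r=−p+1}^{p} γ^{1,j}_{p,r} · f̃^{(k−1)}_{i,r}, then f̃^{k,r}_{i,j} = a·( u_{i+j} + ∑_{l=1}^{k} ((r·Δt)^l / l!) · ũ^{(l)}_{i,j} ) for j, r = −p+1, …, p, and f̃^{(k)}_{i,j}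 = (1/Δt^k) ∑_{r=−p+1}^{p} γ^{k,0}_{p,r} · f̃^{k,r}_{i,j}. Then the CAT numerical flux F^p_{i+1/2} = ∑_{k=1}^{2p} (Δt^{k−1}/k!) ∑_{j=−p+1}^{p} γ^{0,1/2}_{p,j} · f̃^{(k−1)}_{i,j} equals the numerical flux of the order-2p Lax–Wendroff method: F^p_{i+1/2} = ∑_{k=1}^{2p} (−1)^{k−1} (a^k Δt^{k−1} / (k! Δx^{k−1})) ∑_{j=−p+1}^{p} γ^{k−1,1/2}_{p,j} · u_{i+j}. In other words, the CAT method reduces to the high-order Lax–Wendroff method when the flux is linear. -/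
/-- Lagrange basis polynomial `G_{p,j}` on nodes `-p+1, …, p`. -/
noncomputable def Gpoly (p : ℕ) (j : ℤ) (x : ℝ) : ℝ :=
  ∏ r ∈ (Finset.Icc (-(p:ℤ)+1) (p:ℤ)).erase j, (x - (r:ℝ)) / ((j:ℝ) - (r:ℝ))

/-- `γ^{k,q}_{p,j} = G_{p,j}^{(k)}(q)`. -/
noncomputable def gam (p k : ℕ) (q : ℝ) (j : ℤ) : ℝ := iteratedDeriv k (Gpoly p j) q

open Finset Polynomial

lemma card_nodes (p : ℕ) : (Finset.Icc (-(p:ℤ)+1) (p:ℤ)).card = 2*p := by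
  rw [Int.card_Icc]; omega

lemma inj_nodes (p : ℕ) : Set.InjOn (fun r : ℤ => (r:ℝ)) (Finset.Icc (-(p:ℤ)+1) (p:ℤ)) :=
  fun x _ y _ h => Int.cast_injective h

lemma Gpoly_eq (p : ℕ) (j : ℤ) (x : ℝ) :
    Gpoly p j x = (Lagrange.basis (Finset.Icc (-(p:ℤ)+1) (p:ℤ)) (fun r : ℤ => (r:ℝ)) j).eval x := by
  rw [Gpoly, Lagrange.basis, eval_prod]
  refine Finset.prod_congr rfl fun r _ => ?_
  simp [Lagrange.basisDivisor, div_eq_inv_mul, mul_comm]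

lemma iteratedDeriv_polyeval (P : Polynomial ℝ) (k : ℕ) :
    iteratedDeriv k (fun x => P.eval x) = fun x => (derivative^[k] P).eval x := by
  induction k with
  | zero => simp
  | succ n ih =>
      rw [Function.iterate_succ_apply', iteratedDeriv_succ, ih]
      funext x
      exact Polynomial.deriv (p := derivative^[n] P) (x := x)

lemma gam_eq (p k : ℕ) (q : ℝ) (j : ℤ) :
    gam p k q j = (derivative^[k] (Lagrange.basis (Finset.Icc (-(p:ℤ)+1) (p:ℤ)) (fun r : ℤ => (r:ℝ)) j)).eval q := by
  have : Gpoly p j = fun x => (Lagrange.basis (Finset.Icc (-(p:ℤ)+1) (p:ℤ)) (fun r : ℤ => (r:ℝ)) j).eval x :=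
    funext fun x => Gpoly_eq p j x
  rw [gam, this, iteratedDeriv_polyeval]

lemma inj_nodes' (p : ℕ) : Set.InjOn (fun r : ℤ => (r:ℝ)) (Finset.Icc (-(p:ℤ)+1) (p:ℤ)) :=
  fun x _ y _ h => Int.cast_injective h

lemma key (p : ℕ) (Q : Polynomial ℝ) (hQ : Q.degree < (2*p : ℕ)) (k : ℕ) (q : ℝ) :
    ∑ r ∈ Finset.Icc (-(p:ℤ)+1) (p:ℤ), gam p k q r * Q.eval (r:ℝ)
      = (derivative^[k] Q).eval q := by
  have hcard : Q.degree < ((Finset.Icc (-(p:ℤ)+1) (p:ℤ)).card : WithBot ℕ) := by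
    rw [card_nodes]; exact hQ
  have hint := Lagrange.eq_interpolate (v := fun r : ℤ => (r:ℝ)) (inj_nodes' p) hcard
  conv_rhs => rw [hint]
  rw [Lagrange.interpolate_apply, iterate_derivative_sum, eval_finset_sum]
  refine Finset.sum_congr rfl fun r hr => ?_
  rw [gam_eq, iterate_derivative_C_mul, eval_mul, eval_C]
  ring

lemma key_pow (p k l : ℕ) (hl : l < 2*p) :
    ∑ r ∈ Finset.Icc (-(p:ℤ)+1) (p:ℤ), gam p k 0 r * (r:ℝ)^l
      = if k = l then (l.factorial : ℝ) else 0 := by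
  have h := key p (X^l : ℝ[X]) (by rw [degree_X_pow]; exact_mod_cast hl) k 0
  simp only [eval_pow, eval_X] at h
  rw [h, iterate_derivative_X_pow_eq_natCast_mul, eval_mul, eval_pow, eval_X, eval_natCast]
  rcases lt_trichotomy k l with hkl|hkl|hkl
  · rw [if_neg hkl.ne, zero_pow (by omega), mul_zero]
  · subst hkl; simp [Nat.descFactorial_self]
  · rw [if_neg hkl.ne', Nat.descFactorial_eq_zero_iff_lt.mpr hkl]; simp

lemma deg_iter (P : Polynomial ℝ) (m : ℕ) : (derivative^[m] P).degree ≤ P.degree := by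
  induction m with
  | zero => simp
  | succ n ih => rw [Function.iterate_succ_apply']; exact degree_derivative_le.trans ih

/-- For a linear flux f(v) = a·v, the Compact Approximate Taylor (CAT) numerical
flux F^p_{i+1/2} = ∑_{k=1}^{2p} (Δt^{k-1}/k!) ∑_{j=-p+1}^{p} γ^{0,1/2}_{p,j} f̃^{(k-1)}_{i,j}
equals the numerical flux of the order-2p Lax–Wendroff method:
∑_{k=1}^{2p} (-1)^{k-1} (a^k Δt^{k-1}/(k! Δx^{k-1})) ∑_{j=-p+1}^{p} γ^{k-1,1/2}_{p,j} u_{i+j}.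
Here f̃^{(0)}_{i,j} = a u_{i+j}, and for k = 1, …, 2p:
ũ^{(k)}_{i,j} = -(1/Δx) ∑_r γ^{1,j}_{p,r} f̃^{(k-1)}_{i,r},
f̃^{k,r}_{i,j} = a (u_{i+j} + ∑_{l=1}^{k} ((rΔt)^l/l!) ũ^{(l)}_{i,j}),
f̃^{(k)}_{i,j} = (1/Δt^k) ∑_r γ^{k,0}_{p,r} f̃^{k,r}_{i,j}. -/
theorem CAT_reduces_to_LaxWendroff (p : ℕ) (hp : 1 ≤ p)
    (a Δx Δt : ℝ) (hΔx : 0 < Δx) (hΔt : 0 < Δt) (u : ℤ → ℝ) (i : ℤ)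
    (util ftil : ℕ → ℤ → ℝ) (fstage : ℕ → ℤ → ℤ → ℝ)
    (h0 : ∀ j ∈ Finset.Icc (-(p:ℤ)+1) (p:ℤ), ftil 0 j = a * u (i + j))
    (hu : ∀ k, 1 ≤ k → k ≤ 2*p → ∀ j ∈ Finset.Icc (-(p:ℤ)+1) (p:ℤ),
      util k j = -(1/Δx) *
        ∑ r ∈ Finset.Icc (-(p:ℤ)+1) (p:ℤ), gam p 1 (j:ℝ) r * ftil (k-1) r)
    (hs : ∀ k, 1 ≤ k → k ≤ 2*p → ∀ j ∈ Finset.Icc (-(p:ℤ)+1) (p:ℤ),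
      ∀ r ∈ Finset.Icc (-(p:ℤ)+1) (p:ℤ),
      fstage k r j = a * (u (i + j) +
        ∑ l ∈ Finset.Icc 1 k, ((r:ℝ)*Δt)^l / (Nat.factorial l : ℝ) * util l j))
    (hf : ∀ k, 1 ≤ k → k ≤ 2*p → ∀ j ∈ Finset.Icc (-(p:ℤ)+1) (p:ℤ),
      ftil k j = (1/Δt^k) *
        ∑ r ∈ Finset.Icc (-(p:ℤ)+1) (p:ℤ), gam p k 0 r * fstage k r j) :
    ∑ k ∈ Finset.Icc 1 (2*p), (Δt^(k-1) / (Nat.factorial k : ℝ)) *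
        ∑ j ∈ Finset.Icc (-(p:ℤ)+1) (p:ℤ), gam p 0 (1/2) j * ftil (k-1) j
      = ∑ k ∈ Finset.Icc 1 (2*p),
          (-1:ℝ)^(k-1) * (a^k * Δt^(k-1) / ((Nat.factorial k : ℝ) * Δx^(k-1))) *
            ∑ j ∈ Finset.Icc (-(p:ℤ)+1) (p:ℤ), gam p (k-1) (1/2) j * u (i + j) := by
  have hΔx0 : Δx ≠ 0 := hΔx.ne'
  have hΔt0 : Δt ≠ 0 := hΔt.ne'
  set P : Polynomial ℝ :=
    Lagrange.interpolate (Finset.Icc (-(p:ℤ)+1) (p:ℤ)) (fun r : ℤ => (r:ℝ))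
      (fun r => u (i + r)) with hPdef
  have hPdeg : P.degree < ((2*p : ℕ) : WithBot ℕ) := by
    have h := Lagrange.degree_interpolate_lt (s := Finset.Icc (-(p:ℤ)+1) (p:ℤ))
      (fun r => u (i + r)) (inj_nodes' p)
    rwa [card_nodes] at h
  have hPeval : ∀ j ∈ Finset.Icc (-(p:ℤ)+1) (p:ℤ), P.eval (j:ℝ) = u (i + j) := fun j hj =>
    Lagrange.eval_interpolate_at_node _ (inj_nodes' p) hj
  have hdeg : ∀ m, (derivative^[m] P).degree < ((2*p : ℕ) : WithBot ℕ) := fun m =>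
    lt_of_le_of_lt (deg_iter P m) hPdeg
  have main : ∀ k, k ≤ 2*p - 1 → ∀ j ∈ Finset.Icc (-(p:ℤ)+1) (p:ℤ),
      ftil k j = a^(k+1) * (-Δx⁻¹)^k * (derivative^[k] P).eval (j:ℝ) := by
    intro k
    induction k using Nat.strong_induction_on with
    | _ k ih =>
      intro hk j hj
      rcases Nat.eq_zero_or_pos k with rfl | hk1
      · rw [h0 j hj]
        simp [hPeval j hj]
      · have hk2p : k ≤ 2*p := by omega
        have hutil : ∀ m, 1 ≤ m → m ≤ k →
            util m j = a^m * (-Δx⁻¹)^m * (derivative^[m] P).eval (j:ℝ) := by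
          intro m hm1 hmk
          rw [hu m hm1 (by omega) j hj]
          have hrw : ∀ r ∈ Finset.Icc (-(p:ℤ)+1) (p:ℤ),
              gam p 1 (j:ℝ) r * ftil (m-1) r
                = (a^m * (-Δx⁻¹)^(m-1)) *
                    (gam p 1 (j:ℝ) r * (derivative^[m-1] P).eval (r:ℝ)) := by
            intro r hr
            have h1 := ih (m-1) (by omega) (by omega) r hr
            rw [show m - 1 + 1 = m from by omega] at h1
            rw [h1]; ring
          rw [Finset.sum_congr rfl hrw, ← Finset.mul_sum, key p _ (hdeg (m-1)) 1 (j:ℝ)]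
          have hiter : derivative^[1] (derivative^[m-1] P) = derivative^[m] P := by
            rw [← Function.iterate_add_apply]
            congr 1
            omega
          rw [hiter]
          have hpow : (-Δx⁻¹)^m = (-Δx⁻¹)^(m-1) * (-Δx⁻¹) := by
            rw [← pow_succ]
            congr 1
            omega
          rw [hpow, one_div]
          ring
        -- now compute ftil k j
        rw [hf k hk1 hk2p j hj]
        have hstage : ∀ r ∈ Finset.Icc (-(p:ℤ)+1) (p:ℤ),
            gam p k 0 r * fstage k r j
              = (a * u (i + j)) * (gam p k 0 r * (r:ℝ)^0)
                + ∑ l ∈ Finset.Icc 1 k,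
                    (a * Δt^l / (Nat.factorial l : ℝ) * util l j) * (gam p k 0 r * (r:ℝ)^l) := by
          intro r hr
          rw [hs k hk1 hk2p j hj r hr, mul_add, Finset.mul_sum, mul_add, Finset.mul_sum]
          congr 1
          · ring
          · refine Finset.sum_congr rfl fun l hl => ?_
            rw [mul_pow]
            ring
        rw [Finset.sum_congr rfl hstage, Finset.sum_add_distrib, ← Finset.mul_sum,
          key_pow p k 0 (by omega), Finset.sum_comm]
        have hsum2 : ∀ l ∈ Finset.Icc 1 k,
            (∑ r ∈ Finset.Icc (-(p:ℤ)+1) (p:ℤ),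
              (a * Δt^l / (Nat.factorial l : ℝ) * util l j) * (gam p k 0 r * (r:ℝ)^l))
            = (a * Δt^l / (Nat.factorial l : ℝ) * util l j) *
                (if k = l then (l.factorial : ℝ) else 0) := by
          intro l hl
          rw [← Finset.mul_sum, key_pow p k l (by
            simp only [Finset.mem_Icc] at hl; omega)]
        rw [Finset.sum_congr rfl hsum2,
          Finset.sum_eq_single_of_mem k (Finset.mem_Icc.mpr ⟨hk1, le_rfl⟩)
            (fun l _ hlk => by rw [if_neg (fun h => hlk h.symm), mul_zero]),
          if_pos rfl, if_neg (by omega), mul_zero, zero_add,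
          hutil k hk1 le_rfl]
        have hfac : ((Nat.factorial k : ℝ)) ≠ 0 := Nat.cast_ne_zero.mpr k.factorial_ne_zero
        have hΔtk : Δt^k ≠ 0 := pow_ne_zero _ hΔt0
        field_simp
        ring
  refine Finset.sum_congr rfl fun k hk => ?_
  rw [Finset.mem_Icc] at hk
  obtain ⟨hk1, hk2⟩ := hk
  have hftil : ∀ j ∈ Finset.Icc (-(p:ℤ)+1) (p:ℤ),
      gam p 0 (1/2) j * ftil (k-1) j
        = (a^k * (-Δx⁻¹)^(k-1)) * (gam p 0 (1/2) j * (derivative^[k-1] P).eval (j:ℝ)) := by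
    intro j hj
    have h1 := main (k-1) (by omega) j hj
    rw [show k - 1 + 1 = k from by omega] at h1
    rw [h1]; ring
  rw [Finset.sum_congr rfl hftil, ← Finset.mul_sum,
    key p _ (hdeg (k-1)) 0 (1/2 : ℝ), Function.iterate_zero_apply]
  have hrhs : ∀ j ∈ Finset.Icc (-(p:ℤ)+1) (p:ℤ),
      gam p (k-1) (1/2) j * u (i + j) = gam p (k-1) (1/2) j * P.eval (j:ℝ) := by
    intro j hj
    rw [hPeval j hj]
  rw [Finset.sum_congr rfl hrhs, key p P hPdeg (k-1) (1/2 : ℝ)]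
  have hpow : (-Δx⁻¹)^(k-1) = (-1:ℝ)^(k-1) * (Δx^(k-1))⁻¹ := by
    rw [neg_pow, inv_pow]
  rw [hpow]
  have hfac : ((Nat.factorial k : ℝ)) ≠ 0 := Nat.cast_ne_zero.mpr k.factorial_ne_zero
  have hΔxk : Δx^(k-1) ≠ 0 := pow_ne_zero _ hΔx0
  field_simp
end
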